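/- arXiv:2204.06188 — 2 statements merged into one kernel-verified Lean document; each statement's English description precedes it below -/
import Mathlib

section
/- Let b, d : [0,1] → ℝ be smooth with d(x) - (1/2)·b''(x) ≥ δ > 0 for all x, and let ε > 0. Then the bilinear form B((u,w),(v,z)) associated with the mixed formulation, B((u,w),(u,w)) = ∫₀¹ (b·(u')² + (d - (1/2)b'')·u² + w²), satisfies B((u,w),(u,w)) ≥ min(b_min, δ, 1)·(|u|₁² + ‖w‖₀²) for all u ∈ H¹₀(0,1), w ∈ L²(0,1), provided b(x) ≥ b_min > 0. -/
open MeasureTheory Real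

theorem stmt13 (ε δ bmin : ℝ) (hε : 0 < ε) (hδ : 0 < δ) (hbmin : 0 < bmin)
    (b d : ℝ → ℝ) (hbs : ContDiff ℝ (⊤ : ℕ∞) b) (hds : ContDiff ℝ (⊤ : ℕ∞) d)
    (hcoer : ∀ x ∈ Set.Icc (0:ℝ) 1, δ ≤ d x - (1/2) * iteratedDeriv 2 b x)
    (hbl : ∀ x ∈ Set.Icc (0:ℝ) 1, bmin ≤ b x)
    (u w : ℝ → ℝ) (hu : ContDiff ℝ 1 u) (hu0 : u 0 = 0) (hu1 : u 1 = 0)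
    (hw : IntervalIntegrable (fun x => (w x) ^ 2) volume 0 1) :
    min (min bmin δ) 1 *
        ((∫ x in (0:ℝ)..1, (deriv u x) ^ 2) + ∫ x in (0:ℝ)..1, (w x) ^ 2)
      ≤ ∫ x in (0:ℝ)..1,
          (b x * (deriv u x) ^ 2
            + (d x - (1/2) * iteratedDeriv 2 b x) * (u x) ^ 2 + (w x) ^ 2) := by
  set m := min (min bmin δ) 1 with hm
  have hm1 : m ≤ 1 := min_le_right _ _
  have hmb : m ≤ bmin := le_trans (min_le_left _ _) (min_le_left _ _)
  have hmδ : m ≤ δ := le_trans (min_le_left _ _) (min_le_right _ _)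
  have hdu : Continuous (deriv u) := (hu.continuous_deriv le_rfl)
  have hb2 : Continuous (iteratedDeriv 2 b) := by
    rw [iteratedDeriv_eq_iterate]
    exact (ContDiff.iterate_deriv 2 (hbs.of_le (by simp))).continuous
  have hc1 : Continuous fun x => b x * (deriv u x) ^ 2
      + (d x - (1/2) * iteratedDeriv 2 b x) * (u x) ^ 2 :=
    ((hbs.continuous.mul (hdu.pow 2)).add
      ((hds.continuous.sub (continuous_const.mul hb2)).mul ((hu.continuous.pow 2))))
  have hI1 : IntervalIntegrable (fun x => b x * (deriv u x) ^ 2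
      + (d x - (1/2) * iteratedDeriv 2 b x) * (u x) ^ 2) volume 0 1 :=
    hc1.intervalIntegrable 0 1
  have hIR : IntervalIntegrable (fun x => b x * (deriv u x) ^ 2
      + (d x - (1/2) * iteratedDeriv 2 b x) * (u x) ^ 2 + (w x) ^ 2) volume 0 1 :=
    hI1.add hw
  have hIdu : IntervalIntegrable (fun x => (deriv u x) ^ 2) volume 0 1 :=
    (hdu.pow 2).intervalIntegrable 0 1
  have hIL : IntervalIntegrable (fun x => m * (deriv u x) ^ 2 + m * (w x) ^ 2) volume 0 1 :=
    (hIdu.const_mul m).add (hw.const_mul m)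
  have hEq : m * ((∫ x in (0:ℝ)..1, (deriv u x) ^ 2) + ∫ x in (0:ℝ)..1, (w x) ^ 2)
      = ∫ x in (0:ℝ)..1, (m * (deriv u x) ^ 2 + m * (w x) ^ 2) := by
    rw [intervalIntegral.integral_add (hIdu.const_mul m) (hw.const_mul m),
      intervalIntegral.integral_const_mul, intervalIntegral.integral_const_mul]
    ring
  rw [hEq]
  apply intervalIntegral.integral_mono_on (by norm_num) hIL hIR
  intro x hx
  have h1 := hbl x hx
  have h2 := hcoer x hx
  nlinarith [sq_nonneg (deriv u x), sq_nonneg (u x), sq_nonneg (w x),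
    mul_le_mul_of_nonneg_right (le_trans hmb h1) (sq_nonneg (deriv u x)),
    mul_le_mul_of_nonneg_right hm1 (sq_nonneg (w x)),
    mul_nonneg (le_trans hδ.le h2) (sq_nonneg (u x))]
end

section
/- Let k ≥ 1 and consider on an interval [a,b] the interpolation operator π into polynomials of degree ≤ k defined by (πv)(a) = v(a), (πv)(b) = v(b), and ∫ₐᵇ (x-a)^l·(πv)(x) dx = ∫ₐᵇ (x-a)^l·v(x) dx for l = 1,…,k-1. Then π is well-defined (these k+1 conditions determine πv uniquely) and πv = v for every polynomial v of degree ≤ k. -/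
/-!
If `p` has degree at most `k`, vanishes at `a` and `b` and has vanishing moments against
`(x - a) ^ l`, `1 ≤ l ≤ k - 1`, write `p = (x - a) (x - b) r` with `deg r ≤ k - 2`.
Then `(x - a) r` is a combination of the weights `(x - a) ^ l`, so
`∫ (x - a) r p = -∫ (x - a)² (b - x) r² = 0`, which forces `r = 0`. Hence the `k + 1`
interpolation conditions define an injective linear map on the `(k + 1)`-dimensional space of
polynomials of degree at most `k`, which is therefore bijective.
-/

open MeasureTheory Real Polynomial

noncomputable section

def interpData (a b : ℝ) (k : ℕ) (v : ℝ → ℝ) : ℝ × ℝ × (Fin (k - 1) → ℝ) :=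
  (v a, v b, fun i => ∫ x in a..b, (x - a) ^ (i + 1 : ℕ) * v x)

lemma interpData_eq_iff {a b : ℝ} {k : ℕ} {v w : ℝ → ℝ} :
    interpData a b k v = interpData a b k w ↔ v a = w a ∧ v b = w b ∧
      ∀ l : ℕ, 1 ≤ l → l ≤ k - 1 →
        (∫ x in a..b, (x - a) ^ l * v x) = ∫ x in a..b, (x - a) ^ l * w x := by
  simp only [interpData, Prod.mk.injEq, funext_iff]
  refine and_congr_right' <| and_congr_right'
    ⟨fun h l hl₁ hl₂ => ?_, fun h i => h _ le_add_self (by omega)⟩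
  obtain ⟨i, rfl⟩ := Nat.exists_eq_add_of_le' hl₁
  exact h ⟨i, by omega⟩

lemma intervalIntegrable_sub_pow_mul_eval (a b c : ℝ) (l : ℕ) (p : ℝ[X]) :
    IntervalIntegrable (fun x => (x - c) ^ l * p.eval x) (volume : Measure ℝ) a b :=
  (by fun_prop : Continuous _).intervalIntegrable a b

def interpMap (a b : ℝ) (k : ℕ) : ℝ[X] →ₗ[ℝ] ℝ × ℝ × (Fin (k - 1) → ℝ) where
  toFun p := interpData a b k (fun x => p.eval x)
  map_add' p q := by
    simp only [interpData, eval_add, mul_add, Prod.mk_add_mk]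
    congr
    funext i
    exact intervalIntegral.integral_add (intervalIntegrable_sub_pow_mul_eval _ _ _ _ _)
      (intervalIntegrable_sub_pow_mul_eval _ _ _ _ _)
  map_smul' c p := by
    simp only [interpData, eval_smul, smul_eq_mul, mul_left_comm _ c,
      intervalIntegral.integral_const_mul, Prod.smul_mk, RingHom.id_apply]
    rfl

lemma exists_eq_X_sub_C_mul_X_sub_C_mul {K : Type*} [Field K] {a b : K} (hab : a ≠ b) {p : K[X]}
    (ha : p.eval a = 0) (hb : p.eval b = 0) : ∃ r, p = (X - C a) * (X - C b) * r :=
  (isCoprime_X_sub_C_of_isUnit_sub (sub_ne_zero.2 hab).isUnit).mul_dvd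
    (dvd_iff_isRoot.2 ha) (dvd_iff_isRoot.2 hb)

lemma integral_sub_mul_eval_mul_eval_eq_zero_of_moments {a b : ℝ} {n : ℕ} {p r : ℝ[X]}
    (hr : r.natDegree < n) (hp : ∀ i < n, ∫ x in a..b, (x - a) ^ (i + 1) * p.eval x = 0) :
    ∫ x in a..b, (x - a) * r.eval x * p.eval x = 0 := by
  have hexpand : ∀ x, (x - a) * r.eval x * p.eval x =
      ∑ i ∈ Finset.range n, (taylor a r).coeff i * ((x - a) ^ (i + 1) * p.eval x) := by
    intro x
    have h := eval_eq_sum_range' (p := taylor a r) (by rwa [natDegree_taylor]) (x - a)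
    rw [taylor_eval, sub_add_cancel] at h
    rw [h, Finset.mul_sum, Finset.sum_mul]
    exact Finset.sum_congr rfl fun i _ => by ring
  simp_rw [hexpand]
  rw [intervalIntegral.integral_finsetSum
    fun i _ => (intervalIntegrable_sub_pow_mul_eval _ _ _ _ _).const_mul _]
  exact Finset.sum_eq_zero fun i hi => by
    rw [intervalIntegral.integral_const_mul, hp i (Finset.mem_range.1 hi), mul_zero]

lemma eq_zero_of_integral_weight_mul_eval_sq_eq_zero {a b : ℝ} (hab : a < b) {r : ℝ[X]}
    (h : ∫ x in a..b, (x - a) ^ 2 * (b - x) * r.eval x ^ 2 = 0) : r = 0 := by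
  by_contra hr
  obtain ⟨c, hc, hrc⟩ : ∃ c ∈ Set.Ioo a b, r.eval c ≠ 0 := by
    by_contra! h0
    exact hr (eq_zero_of_infinite_isRoot r ((Set.Ioo_infinite hab).mono h0))
  refine h.not_gt (intervalIntegral.integral_pos hab (by fun_prop) (fun x hx => ?_)
    ⟨c, Set.Ioo_subset_Icc_self hc, ?_⟩)
  · exact mul_nonneg (mul_nonneg (sq_nonneg _) (sub_nonneg.2 hx.2)) (sq_nonneg _)
  · have := sub_pos.2 hc.1
    have := sub_pos.2 hc.2
    positivity

lemma eq_zero_of_interpData_eq_zero {a b : ℝ} (hab : a < b) {k : ℕ} {p : ℝ[X]}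
    (hp : p.natDegree ≤ k) (h : interpData a b k (fun x => p.eval x) = 0) : p = 0 := by
  simp only [interpData, Prod.mk_eq_zero, funext_iff, Pi.zero_apply] at h
  obtain ⟨ha, hb, hm⟩ := h
  obtain ⟨r, rfl⟩ := exists_eq_X_sub_C_mul_X_sub_C_mul hab.ne ha hb
  rcases eq_or_ne r 0 with rfl | hr0
  · rw [mul_zero]
  have hr : r.natDegree < k - 1 := by
    rw [((monic_X_sub_C a).mul (monic_X_sub_C b)).natDegree_mul' hr0,
      natDegree_mul (X_sub_C_ne_zero a) (X_sub_C_ne_zero b), natDegree_X_sub_C,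
      natDegree_X_sub_C] at hp
    omega
  refine absurd (eq_zero_of_integral_weight_mul_eval_sq_eq_zero hab ?_) hr0
  calc ∫ x in a..b, (x - a) ^ 2 * (b - x) * r.eval x ^ 2
      = -∫ x in a..b, (x - a) * r.eval x * ((X - C a) * (X - C b) * r).eval x := by
        rw [← intervalIntegral.integral_neg]
        congr 1
        funext x
        simp only [eval_mul, eval_sub, eval_X, eval_C]
        ring
    _ = 0 := by
        rw [integral_sub_mul_eval_mul_eval_eq_zero_of_moments hr fun i hi => hm ⟨i, hi⟩,
          neg_zero]

lemma mem_degreeLT_succ_iff {R : Type*} [Semiring R] {n : ℕ} {p : R[X]} :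
    p ∈ degreeLT R (n + 1) ↔ p.natDegree ≤ n := by
  rw [degreeLT_succ_eq_degreeLE, mem_degreeLE, natDegree_le_iff_degree_le]

lemma interpMap_domRestrict_bijective {a b : ℝ} (hab : a < b) {k : ℕ} (hk : 1 ≤ k) :
    Function.Bijective ((interpMap a b k).domRestrict (degreeLT ℝ (k + 1))) := by
  have hinj : Function.Injective ((interpMap a b k).domRestrict (degreeLT ℝ (k + 1))) := by
    rw [← LinearMap.ker_eq_bot, LinearMap.ker_eq_bot']
    rintro ⟨p, hp⟩ h
    exact Subtype.ext (eq_zero_of_interpData_eq_zero hab (mem_degreeLT_succ_iff.1 hp) h)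
  have hdim : Module.finrank ℝ (degreeLT ℝ (k + 1)) =
      Module.finrank ℝ (ℝ × ℝ × (Fin (k - 1) → ℝ)) := by
    simp only [(degreeLTEquiv ℝ (k + 1)).finrank_eq, Module.finrank_fintype_fun_eq_card,
      Fintype.card_fin, Module.finrank_prod, Module.finrank_self]
    omega
  exact ⟨hinj, (LinearMap.injective_iff_surjective_of_finrank_eq_finrank hdim).1 hinj⟩

end

theorem stmt14 (a b : ℝ) (hab : a < b) (k : ℕ) (hk : 1 ≤ k) :
    (∀ v : ℝ → ℝ, ContinuousOn v (Set.Icc a b) →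
      ∃! p : Polynomial ℝ, p.natDegree ≤ k ∧ p.eval a = v a ∧ p.eval b = v b ∧
        ∀ l : ℕ, 1 ≤ l → l ≤ k - 1 →
          (∫ x in a..b, (x - a) ^ l * p.eval x) = ∫ x in a..b, (x - a) ^ l * v x) ∧
    ∀ q : Polynomial ℝ, q.natDegree ≤ k →
      ∀ p : Polynomial ℝ,
        (p.natDegree ≤ k ∧ p.eval a = q.eval a ∧ p.eval b = q.eval b ∧
          ∀ l : ℕ, 1 ≤ l → l ≤ k - 1 →
            (∫ x in a..b, (x - a) ^ l * p.eval x) = ∫ x in a..b, (x - a) ^ l * q.eval x) →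
        p = q := by
  obtain ⟨hinj, hsurj⟩ := interpMap_domRestrict_bijective hab hk
  have heq {p q : ℝ[X]} (hp : p.natDegree ≤ k) (hq : q.natDegree ≤ k)
      (h : interpData a b k (fun x => p.eval x) = interpData a b k (fun x => q.eval x)) :
      p = q :=
    congrArg Subtype.val
      (@hinj ⟨p, mem_degreeLT_succ_iff.2 hp⟩ ⟨q, mem_degreeLT_succ_iff.2 hq⟩ h)
  refine ⟨fun v _ => ?_, fun q hq p hp => heq hp.1 hq (interpData_eq_iff.2 hp.2)⟩
  obtain ⟨⟨p, hp⟩, hpv : interpData a b k (fun x => p.eval x) = interpData a b k v⟩ :=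
    hsurj (interpData a b k v)
  refine ⟨p, ⟨mem_degreeLT_succ_iff.1 hp, interpData_eq_iff.1 hpv⟩, fun q hq => ?_⟩
  exact heq hq.1 (mem_degreeLT_succ_iff.1 hp) (hpv ▸ interpData_eq_iff.2 hq.2)
end
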